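/- For every set C ∈ E there exist a strictly increasing sequence 0 = k₀ < k₁ < k₂ < ⋯ of natural numbers and sets φ(n) ⊆ 2^{[k_n, k_{n+1})} with |φ(n)| · 2^{-(k_{n+1} - k_n)} ≤ 4^{-n} for every n, such that C ⊆ {x ∈ 2^ω : x↾[k_n, k_{n+1}) ∈ φ(n) for all but finitely many n}. -/

import Mathlib

open MeasureTheory Set Filter Cardinal

/-- `μ` is the uniform product ("fair coin") probability measure on Cantor space `2^ω`,
characterized by its values on cylinders. -/
def IsFairCoin (μ : Measure (ℕ → Bool)) : Prop :=
  ∀ (s : Finset ℕ) (σ : ℕ → Bool),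
    μ {x : ℕ → Bool | ∀ i ∈ s, x i = σ i} = (1 / 2 : ENNReal) ^ s.card

/-- The σ-ideal of μ-null sets. -/
def nullIdeal (μ : Measure (ℕ → Bool)) : Set (Set (ℕ → Bool)) := {A | μ A = 0}

/-- The σ-ideal of meager subsets of Cantor space. -/
def meagerIdeal : Set (Set (ℕ → Bool)) := {A | IsMeagre A}

/-- The σ-ideal generated by closed measure zero sets. -/
def closedNullIdeal (μ : Measure (ℕ → Bool)) : Set (Set (ℕ → Bool)) :=
  {A | ∃ F : ℕ → Set (ℕ → Bool), (∀ n, IsClosed (F n) ∧ μ (F n) = 0) ∧ A ⊆ ⋃ n, F n}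

/-- `add(I, J)`: the least cardinality of a subfamily of `I` whose union is not in `J`. -/
noncomputable def addIJ (I J : Set (Set (ℕ → Bool))) : Cardinal :=
  sInf {c : Cardinal | ∃ A : Set (Set (ℕ → Bool)), A ⊆ I ∧ ⋃₀ A ∉ J ∧ c = #A}

/-- `cov(J)`: the least cardinality of a subfamily of `J` covering the whole space. -/
noncomputable def covI (J : Set (Set (ℕ → Bool))) : Cardinal :=
  sInf {c : Cardinal | ∃ A : Set (Set (ℕ → Bool)), A ⊆ J ∧ ⋃₀ A = Set.univ ∧ c = #A}

/-- `unif(J)`: the least cardinality of a set of reals not in `J`. -/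
noncomputable def unifI (J : Set (Set (ℕ → Bool))) : Cardinal :=
  sInf {c : Cardinal | ∃ X : Set (ℕ → Bool), X ∉ J ∧ c = #X}

/-- `cof(I, J)`: the least cardinality of a subfamily of `J` cofinal over `I`. -/
noncomputable def cofIJ (I J : Set (Set (ℕ → Bool))) : Cardinal :=
  sInf {c : Cardinal | ∃ A : Set (Set (ℕ → Bool)), A ⊆ J ∧
    (∀ B ∈ I, ∃ C ∈ A, B ⊆ C) ∧ c = #A}

/-- The dominating number 𝔡. -/
noncomputable def frakD : Cardinal :=
  sInf {c : Cardinal | ∃ F : Set (ℕ → ℕ),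
    (∀ g : ℕ → ℕ, ∃ f ∈ F, ∀ᶠ n in atTop, g n ≤ f n) ∧ c = #F}

/-- The unbounding number 𝔟. -/
noncomputable def frakB : Cardinal :=
  sInf {c : Cardinal | ∃ F : Set (ℕ → ℕ),
    (∀ g : ℕ → ℕ, ∃ f ∈ F, ¬ ∀ᶠ n in atTop, f n ≤ g n) ∧ c = #F}

/-! A closed null set `F` is the intersection of the clopen sets of points that agree on `[0, l)`
with some point of `F`; the measures of these sets, `#(F↾[0, l)) · 2^(-l)`, tend to `0`. Hence for
all `k` and `e` there is `l > k` with `#(F↾[k, l)) · 2^e ≤ 2^(l - k)`. For `C ⊆ ⋃ₘ Fₘ`, choose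
`k (n + 1)` as such an `l` for `F₀ ∪ ⋯ ∪ Fₙ`, `k n` in place of `k` and `e = 2n`, and let `φ n` be the set of
restrictions of `F₀ ∪ ⋯ ∪ Fₙ` to `[k n, k (n + 1))`. A point of `Fₘ` then has its restriction in
`φ n` for every `n ≥ m`. -/

open scoped ENNReal Topology

section Restrict

variable {ι X : Type*}

lemma Finset.restrict_mem_image_of_subset {s t : Finset ι} (hst : s ⊆ t) {F : Set (ι → X)}
    {x : ι → X} (hx : t.restrict x ∈ t.restrict '' F) : s.restrict x ∈ s.restrict '' F := by
  rw [← Finset.restrict₂_comp_restrict hst, Set.image_comp]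
  exact Set.mem_image_of_mem _ hx

lemma Finset.ncard_image_restrict_le [Finite X] {s t : Finset ι} (hst : s ⊆ t)
    (F : Set (ι → X)) : (s.restrict '' F).ncard ≤ (t.restrict '' F).ncard := by
  rw [← Finset.restrict₂_comp_restrict hst, Set.image_comp]
  exact Set.ncard_image_le (Set.toFinite _)

lemma IsClosed.iInter_restrict_range_mem_image [TopologicalSpace X] {F : Set (ℕ → X)}
    (hF : IsClosed F) :
    ⋂ l, {x : ℕ → X | (Finset.range l).restrict x ∈ (Finset.range l).restrict '' F} = F := by
  refine Subset.antisymm (fun x hx => ?_) fun x hx => mem_iInter.2 fun l => ⟨x, hx, rfl⟩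
  choose y hyF hyx using mem_iInter.1 hx
  refine hF.mem_of_tendsto (tendsto_pi_nhds.2 fun i => ?_)
    (Eventually.of_forall (f := atTop) hyF)
  refine Tendsto.congr' ?_ tendsto_const_nhds
  filter_upwards [eventually_gt_atTop i] with l hl
  exact (congrFun (hyx l) ⟨i, Finset.mem_range.2 hl⟩).symm

end Restrict

namespace IsFairCoin

variable {μ : Measure (ℕ → Bool)}

lemma isProbabilityMeasure (hμ : IsFairCoin μ) : IsProbabilityMeasure μ :=
  ⟨by simpa using hμ ∅ fun _ => false⟩

lemma measure_restrict_eq (hμ : IsFairCoin μ) (s : Finset ℕ) (t : s → Bool) :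
    μ {x | s.restrict x = t} = (1 / 2) ^ s.card := by
  classical
  convert hμ s fun i => if h : i ∈ s then t ⟨i, h⟩ else false using 2
  ext x
  simp +contextual [funext_iff]

lemma measure_restrict_mem (hμ : IsFairCoin μ) (s : Finset ℕ) (A : Set (s → Bool)) :
    μ {x | s.restrict x ∈ A} = A.ncard * (1 / 2) ^ s.card := by
  classical
  have hA : {x : ℕ → Bool | s.restrict x ∈ A} =
      ⋃ t ∈ A.toFinset, {x : ℕ → Bool | s.restrict x = t} := by
    ext; simp
  rw [hA, measure_biUnion_finset, Set.ncard_eq_toFinset_card']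
  · simp [hμ.measure_restrict_eq]
  · exact fun t _ t' _ htt' => (Set.disjoint_singleton.2 htt').preimage _
  · exact fun t _ => Finset.measurable_restrict (X := fun _ => Bool) s (measurableSet_singleton t)

lemma tendsto_ncard_image_restrict_range (hμ : IsFairCoin μ) {F : Set (ℕ → Bool)}
    (hF : IsClosed F) (hF0 : μ F = 0) :
    Tendsto (fun l => ((Finset.range l).restrict '' F).ncard * (1 / 2 : ℝ≥0∞) ^ l)
      atTop (𝓝 0) := by
  have := hμ.isProbabilityMeasure
  have h := tendsto_measure_iInter_atTop (μ := μ)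
    (s := fun l => {x : ℕ → Bool |
      (Finset.range l).restrict x ∈ (Finset.range l).restrict '' F})
    (fun l => (Finset.measurable_restrict (X := fun _ => Bool) _
      (Set.toFinite _).measurableSet).nullMeasurableSet)
    (fun l l' hll' _ hx =>
      Finset.restrict_mem_image_of_subset (Finset.range_subset_range.2 hll') hx)
    ⟨0, measure_ne_top _ _⟩
  rw [hF.iInter_restrict_range_mem_image, hF0] at h
  simpa only [Function.comp_def, hμ.measure_restrict_mem, Finset.card_range] using h

lemma exists_ncard_image_restrict_Ico_mul_le (hμ : IsFairCoin μ) {F : Set (ℕ → Bool)}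
    (hF : IsClosed F) (hF0 : μ F = 0) (k e : ℕ) :
    ∃ l, k < l ∧ ((Finset.Ico k l).restrict '' F).ncard * 2 ^ e ≤ 2 ^ (l - k) := by
  have hsmall := (hμ.tendsto_ncard_image_restrict_range hF hF0).eventually_lt_const
    (ENNReal.pow_pos (by norm_num : (0 : ℝ≥0∞) < 1 / 2) (k + e))
  obtain ⟨l, hl, hkl⟩ := (hsmall.and (eventually_gt_atTop k)).exists
  refine ⟨l, hkl, ?_⟩
  have hN : ((Finset.range l).restrict '' F).ncard * 2 ^ (k + e) < 2 ^ l := by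
    rw [one_div, ← ENNReal.inv_pow, ← ENNReal.inv_pow, ← div_eq_mul_inv,
      ENNReal.div_lt_iff (by simp) (by simp), mul_comm, ← div_eq_mul_inv,
      ENNReal.lt_div_iff_mul_lt (by simp) (by simp)] at hl
    exact_mod_cast hl
  have hIco : ((Finset.Ico k l).restrict '' F).ncard ≤ ((Finset.range l).restrict '' F).ncard :=
    Finset.ncard_image_restrict_le (fun i hi => Finset.mem_range.2 (Finset.mem_Ico.1 hi).2) F
  refine Nat.le_of_mul_le_mul_right ?_ (Nat.two_pow_pos k)
  calc ((Finset.Ico k l).restrict '' F).ncard * 2 ^ e * 2 ^ k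
      ≤ ((Finset.range l).restrict '' F).ncard * 2 ^ (k + e) := by
        rw [mul_assoc, ← pow_add, add_comm e]; gcongr
    _ ≤ 2 ^ l := hN.le
    _ = 2 ^ (l - k) * 2 ^ k := by rw [← pow_add, Nat.sub_add_cancel hkl.le]

end IsFairCoin

theorem E_set_covered_by_small_sets (μ : Measure (ℕ → Bool)) (hμ : IsFairCoin μ)
    (C : Set (ℕ → Bool)) (hC : C ∈ closedNullIdeal μ) :
    ∃ k : ℕ → ℕ, k 0 = 0 ∧ StrictMono k ∧
      ∃ φ : (n : ℕ) → Finset ((Finset.Ico (k n) (k (n+1))) → Bool),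
        (∀ n, (φ n).card * 4 ^ n ≤ 2 ^ (k (n+1) - k n)) ∧
        C ⊆ {x : ℕ → Bool |
          ∀ᶠ n in atTop, (fun i : (Finset.Ico (k n) (k (n+1))) => x i.1) ∈ φ n} := by
  obtain ⟨F, hF, hCF⟩ := hC
  have hG : ∀ n, IsClosed (accumulate F n) ∧ μ (accumulate F n) = 0 := fun n =>
    ⟨(Set.finite_le_nat n).isClosed_biUnion fun m _ => (hF m).1,
      (measure_biUnion_null_iff (Set.finite_le_nat n).countable).2 fun m _ => (hF m).2⟩
  choose L hkL hL using fun n k =>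
    hμ.exists_ncard_image_restrict_Ico_mul_le (hG n).1 (hG n).2 k (2 * n)
  let k : ℕ → ℕ := fun n => Nat.rec 0 (fun n kn => L n kn) n
  refine ⟨k, rfl, strictMono_nat_of_lt_succ fun n => hkL n (k n),
    fun n => (Set.toFinite ((Finset.Ico (k n) (k (n + 1))).restrict '' accumulate F n)).toFinset,
    fun n => ?_, fun x hx => ?_⟩
  · simpa [← Set.ncard_eq_toFinset_card, pow_mul] using hL n (k n)
  · obtain ⟨m, hm⟩ := mem_iUnion.1 (hCF hx)
    filter_upwards [eventually_ge_atTop m] with n hn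
    exact (Set.Finite.mem_toFinset _).2 ⟨x, monotone_accumulate hn (subset_accumulate hm), rfl⟩
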